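/- (Balance property) For any intermediate point t ∈ (0,1), the normalized thermodynamic integral over [t,1] is the negative of that over [0,t]: ∫_t^1 ∫_Θ p_s(θ) log(p₁(θ)/p₀(θ)) dν(θ) ds = −∫_0^t ∫_Θ p_s(θ) log(p₁(θ)/p₀(θ)) dν(θ) ds. -/

import Mathlib

open MeasureTheory Real Set ProbabilityTheory

/-!
Write `P₀ = p₀ ν` and `L = log (p₁ / p₀)`. Then `p₁ ^ s p₀ ^ (1 - s) = p₀ exp (s L)`, so `μ` is
the moment generating function of `L` under `P₀`, and the inner integral
`∫ p_s L dν = P₀[L exp (s L)] / μ(s)` is the derivative of the cumulant generating function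
`log μ`. The two thermodynamic integrals are therefore `log μ(1) - log μ(t)` and
`log μ(t) - log μ(0)`, and `μ(0) = μ(1) = 1`.
-/

lemma exp_mul_le_exp_mul_add_exp_mul {a b t : ℝ} (x : ℝ) (hat : a ≤ t) (htb : t ≤ b) :
    exp (t * x) ≤ exp (a * x) + exp (b * x) := by
  rcases le_total 0 x with hx | hx
  · have := exp_le_exp.mpr (mul_le_mul_of_nonneg_right htb hx)
    linarith [exp_pos (a * x)]
  · have := exp_le_exp.mpr (mul_le_mul_of_nonpos_right hat hx)
    linarith [exp_pos (b * x)]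

lemma rpow_mul_rpow_one_sub_eq_mul_exp {x y : ℝ} (hx : 0 < x) (hy : 0 < y) (s : ℝ) :
    y ^ s * x ^ (1 - s) = x * exp (s * log (y / x)) := by
  rw [rpow_def_of_pos hy, rpow_def_of_pos hx, ← exp_add, log_div hy.ne' hx.ne',
    show log y * s + log x * (1 - s) = log x + s * (log y - log x) by ring, exp_add, exp_log hx]

namespace ProbabilityTheory

variable {Ω : Type*} {m : MeasurableSpace Ω} {X : Ω → ℝ} {μ : Measure Ω} {a b : ℝ}

lemma Icc_subset_integrableExpSet (ha : Integrable (fun ω ↦ exp (a * X ω)) μ)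
    (hb : Integrable (fun ω ↦ exp (b * X ω)) μ) : Icc a b ⊆ integrableExpSet X μ :=
  fun _ ht ↦ integrable_exp_mul_of_le_of_le ha hb ht.1 ht.2

lemma Ioo_subset_interior_integrableExpSet (ha : Integrable (fun ω ↦ exp (a * X ω)) μ)
    (hb : Integrable (fun ω ↦ exp (b * X ω)) μ) : Ioo a b ⊆ interior (integrableExpSet X μ) :=
  interior_Icc (a := a) (b := b) ▸ interior_mono (Icc_subset_integrableExpSet ha hb)

lemma continuousOn_mgf_Icc (ha : Integrable (fun ω ↦ exp (a * X ω)) μ)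
    (hb : Integrable (fun ω ↦ exp (b * X ω)) μ) : ContinuousOn (mgf X μ) (Icc a b) := by
  refine continuousOn_of_dominated (bound := fun ω ↦ exp (a * X ω) + exp (b * X ω))
    (fun t ht ↦ (Icc_subset_integrableExpSet ha hb ht).aestronglyMeasurable)
    (fun t ht ↦ ae_of_all _ fun ω ↦ ?_) (ha.add hb) (ae_of_all _ fun ω ↦ by fun_prop)
  rw [norm_of_nonneg (exp_pos _).le]
  exact exp_mul_le_exp_mul_add_exp_mul _ ht.1 ht.2

lemma continuousOn_cgf_Icc (hμ : μ ≠ 0) (ha : Integrable (fun ω ↦ exp (a * X ω)) μ)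
    (hb : Integrable (fun ω ↦ exp (b * X ω)) μ) : ContinuousOn (cgf X μ) (Icc a b) :=
  (continuousOn_mgf_Icc ha hb).log fun _ ht ↦
    (mgf_pos' hμ (Icc_subset_integrableExpSet ha hb ht)).ne'

lemma norm_integral_mul_exp_div_mgf_le (t : ℝ) :
    ‖μ[fun ω ↦ X ω * exp (t * X ω)] / mgf X μ t‖
      ≤ μ[fun ω ↦ |X ω| * exp (t * X ω)] / mgf X μ t := by
  rw [norm_div, norm_of_nonneg mgf_nonneg]
  refine div_le_div_of_nonneg_right ((norm_integral_le_integral_norm _).trans_eq ?_) mgf_nonneg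
  simp only [norm_mul, norm_eq_abs, abs_exp]

lemma integrableOn_integral_mul_exp_div_mgf (ha : Integrable (fun ω ↦ exp (a * X ω)) μ)
    (hb : Integrable (fun ω ↦ exp (b * X ω)) μ)
    (hint : IntegrableOn (fun t ↦ μ[fun ω ↦ |X ω| * exp (t * X ω)] / mgf X μ t) (Icc a b)) :
    IntegrableOn (fun t ↦ μ[fun ω ↦ X ω * exp (t * X ω)] / mgf X μ t) (Icc a b) := by
  have hsub := Ioo_subset_interior_integrableExpSet ha hb
  have hcont : ContinuousOn (fun t ↦ μ[fun ω ↦ X ω * exp (t * X ω)] / mgf X μ t) (Ioo a b) :=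
    (analyticOnNhd_cgf.deriv.continuousOn.mono hsub).congr fun t ht ↦ (deriv_cgf (hsub ht)).symm
  rw [integrableOn_Icc_iff_integrableOn_Ioo] at hint ⊢
  exact hint.mono' (hcont.aestronglyMeasurable measurableSet_Ioo)
    (ae_of_all _ norm_integral_mul_exp_div_mgf_le)

lemma integral_integral_mul_exp_div_mgf_eq_cgf_sub (hμ : μ ≠ 0) (hab : a ≤ b)
    (ha : Integrable (fun ω ↦ exp (a * X ω)) μ) (hb : Integrable (fun ω ↦ exp (b * X ω)) μ)
    (hint : IntegrableOn (fun t ↦ μ[fun ω ↦ |X ω| * exp (t * X ω)] / mgf X μ t) (Icc a b)) :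
    ∫ t in a..b, μ[fun ω ↦ X ω * exp (t * X ω)] / mgf X μ t = cgf X μ b - cgf X μ a := by
  refine intervalIntegral.integral_eq_sub_of_hasDeriv_right_of_le hab
    (continuousOn_cgf_Icc hμ ha hb) (fun t ht ↦ ?_) ((intervalIntegrable_iff_integrableOn_Icc_of_le
      hab).2 (integrableOn_integral_mul_exp_div_mgf ha hb hint))
  have ht' := Ioo_subset_interior_integrableExpSet ha hb ht
  exact ((hasDerivAt_mgf ht').log
    (mgf_pos' hμ (interior_subset (s := integrableExpSet X μ) ht')).ne').hasDerivWithinAt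

end ProbabilityTheory

section WithDensity

variable {α : Type*} [MeasurableSpace α] {ν : Measure α} {p : α → ℝ}

lemma integral_withDensity_ofReal (hp : AEMeasurable p ν) (hp0 : 0 ≤ᵐ[ν] p) (g : α → ℝ) :
    ∫ x, g x ∂ν.withDensity (fun x ↦ ENNReal.ofReal (p x)) = ∫ x, p x * g x ∂ν := by
  refine (integral_withDensity_eq_integral_smul₀ hp.real_toNNReal g).trans (integral_congr_ae ?_)
  filter_upwards [hp0] with x (hx : 0 ≤ p x)
  simp [NNReal.smul_def, hx]

lemma integrable_withDensity_ofReal_iff (hp : AEMeasurable p ν) (hp0 : 0 ≤ᵐ[ν] p) {g : α → ℝ} :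
    Integrable g (ν.withDensity fun x ↦ ENNReal.ofReal (p x)) ↔
      Integrable (fun x ↦ p x * g x) ν := by
  refine (integrable_withDensity_iff_integrable_smul₀ hp.real_toNNReal).trans (integrable_congr ?_)
  filter_upwards [hp0] with x (hx : 0 ≤ p x)
  simp [NNReal.smul_def, hx]

end WithDensity

section GeometricPath

variable {Θ : Type*} [MeasurableSpace Θ] {ν : Measure Θ} {p0 p1 : Θ → ℝ}

lemma integral_geometricPath_mul (hp0 : AEMeasurable p0 ν)
    (hpos : ∀ᵐ θ ∂ν, 0 < p0 θ ∧ 0 < p1 θ) (g : Θ → ℝ) (s : ℝ) :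
    ∫ θ, p1 θ ^ s * p0 θ ^ (1 - s) * g θ ∂ν
      = ∫ θ, g θ * exp (s * log (p1 θ / p0 θ)) ∂ν.withDensity (fun θ ↦ ENNReal.ofReal (p0 θ)) := by
  rw [integral_withDensity_ofReal hp0 (hpos.mono fun θ h ↦ h.1.le)]
  refine integral_congr_ae (hpos.mono fun θ h ↦ ?_)
  simp only [rpow_mul_rpow_one_sub_eq_mul_exp h.1 h.2]
  ring

lemma integrable_geometricPath_iff (hp0 : AEMeasurable p0 ν)
    (hpos : ∀ᵐ θ ∂ν, 0 < p0 θ ∧ 0 < p1 θ) (s : ℝ) :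
    Integrable (fun θ ↦ p1 θ ^ s * p0 θ ^ (1 - s)) ν ↔
      Integrable (fun θ ↦ exp (s * log (p1 θ / p0 θ)))
        (ν.withDensity fun θ ↦ ENNReal.ofReal (p0 θ)) := by
  rw [integrable_withDensity_ofReal_iff hp0 (hpos.mono fun θ h ↦ h.1.le)]
  exact integrable_congr (hpos.mono fun θ h ↦ rpow_mul_rpow_one_sub_eq_mul_exp h.1 h.2 s)

end GeometricPath

theorem NTI_balance_property_general
    {Θ : Type*} [MeasurableSpace Θ] (ν : Measure Θ) [SigmaFinite ν]
    (p0 p1 : Θ → ℝ)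
    (hp0pos : ∀ᵐ θ ∂ν, 0 < p0 θ) (hp1pos : ∀ᵐ θ ∂ν, 0 < p1 θ)
    (hp0int : ∫ θ, p0 θ ∂ν = 1) (hp1int : ∫ θ, p1 θ ∂ν = 1)
    (μc : ℝ → ℝ) (hμc : ∀ t, μc t = ∫ θ, p1 θ ^ t * p0 θ ^ (1 - t) ∂ν)
    (hμint : ∀ t ∈ Set.Icc (0:ℝ) 1,
      Integrable (fun θ => p1 θ ^ t * p0 θ ^ (1 - t)) ν)
    (hdom : Integrable
      (fun x : ℝ × Θ =>
        (p1 x.2 ^ x.1 * p0 x.2 ^ (1 - x.1) / μc x.1) * |Real.log (p1 x.2 / p0 x.2)|)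
      ((volume.restrict (Set.Icc (0:ℝ) 1)).prod ν))
    (t : ℝ) (ht : t ∈ Set.Ioo (0:ℝ) 1) :
    (∫ s in t..(1:ℝ), ∫ θ,
        (p1 θ ^ s * p0 θ ^ (1 - s) / μc s) * Real.log (p1 θ / p0 θ) ∂ν)
      = -(∫ s in (0:ℝ)..t, ∫ θ,
          (p1 θ ^ s * p0 θ ^ (1 - s) / μc s) * Real.log (p1 θ / p0 θ) ∂ν) := by
  set L : Θ → ℝ := fun θ ↦ log (p1 θ / p0 θ)
  set P0 := ν.withDensity fun θ ↦ ENNReal.ofReal (p0 θ)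
  have hpos := hp0pos.and hp1pos
  have hp0 : AEMeasurable p0 ν := by simpa using (hμint 0 (by simp)).aemeasurable
  have hmgf (s : ℝ) : μc s = mgf L P0 s := by
    have h := integral_geometricPath_mul hp0 hpos 1 s
    simp only [Pi.one_apply, mul_one, one_mul] at h
    exact (hμc s).trans h
  have hnormalized (g : Θ → ℝ) (s : ℝ) :
      ∫ θ, (p1 θ ^ s * p0 θ ^ (1 - s) / μc s) * g θ ∂ν
        = P0[fun θ ↦ g θ * exp (s * L θ)] / mgf L P0 s := by
    simp only [div_mul_eq_mul_div, integral_div, integral_geometricPath_mul hp0 hpos, hmgf]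
    rfl
  have hexp (s : ℝ) (hs : s ∈ Icc 0 1) : Integrable (fun θ ↦ exp (s * L θ)) P0 :=
    (integrable_geometricPath_iff hp0 hpos s).1 (hμint s hs)
  have hmgf0 : mgf L P0 0 = 1 := by simpa [← hmgf, hμc] using hp0int
  have hmgf1 : mgf L P0 1 = 1 := by simpa [← hmgf, hμc] using hp1int
  have hP0 : P0 ≠ 0 := fun h ↦ by simp [h] at hmgf0
  have hint : IntegrableOn (fun s ↦ P0[fun θ ↦ |L θ| * exp (s * L θ)] / mgf L P0 s) (Icc 0 1) := by
    have h := hdom.integral_prod_left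
    simp only [hnormalized] at h
    exact h
  obtain ⟨ht0, ht1⟩ := ht
  rw [funext (hnormalized L),
    integral_integral_mul_exp_div_mgf_eq_cgf_sub hP0 ht1.le (hexp t ⟨ht0.le, ht1.le⟩)
      (hexp 1 (by simp)) (hint.mono_set (Icc_subset_Icc ht0.le le_rfl)),
    integral_integral_mul_exp_div_mgf_eq_cgf_sub hP0 ht0.le (hexp 0 (by simp))
      (hexp t ⟨ht0.le, ht1.le⟩) (hint.mono_set (Icc_subset_Icc le_rfl ht1.le))]
  simp only [cgf, hmgf0, hmgf1, log_one]
  ring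

/-- (Balance property) For any intermediate `t ∈ (0,1)`, the normalized thermodynamic
integral over `[t,1]` is the negative of that over `[0,t]`. -/
theorem NTI_balance_property
    {Θ : Type*} [MeasurableSpace Θ] (ν : Measure Θ) [SigmaFinite ν]
    (p0 p1 : Θ → ℝ)
    (hp0pos : ∀ᵐ θ ∂ν, 0 < p0 θ) (hp1pos : ∀ᵐ θ ∂ν, 0 < p1 θ)
    (hp0int : ∫ θ, p0 θ ∂ν = 1) (hp1int : ∫ θ, p1 θ ∂ν = 1)
    (μc : ℝ → ℝ) (hμc : ∀ t, μc t = ∫ θ, p1 θ ^ t * p0 θ ^ (1 - t) ∂ν)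
    (hμint : ∀ t ∈ Set.Icc (0:ℝ) 1,
      Integrable (fun θ => p1 θ ^ t * p0 θ ^ (1 - t)) ν)
    (hμpos : ∀ t ∈ Set.Icc (0:ℝ) 1, 0 < μc t)
    (hdom : Integrable
      (fun x : ℝ × Θ =>
        (p1 x.2 ^ x.1 * p0 x.2 ^ (1 - x.1) / μc x.1) * |Real.log (p1 x.2 / p0 x.2)|)
      ((volume.restrict (Set.Icc (0:ℝ) 1)).prod ν))
    (t : ℝ) (ht : t ∈ Set.Ioo (0:ℝ) 1) :
    (∫ s in t..(1:ℝ), ∫ θ,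
        (p1 θ ^ s * p0 θ ^ (1 - s) / μc s) * Real.log (p1 θ / p0 θ) ∂ν)
      = -(∫ s in (0:ℝ)..t, ∫ θ,
          (p1 θ ^ s * p0 θ ^ (1 - s) / μc s) * Real.log (p1 θ / p0 θ) ∂ν) :=
  NTI_balance_property_general ν p0 p1 hp0pos hp1pos hp0int hp1int μc hμc hμint hdom t ht
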